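/- Let q > 0, φ the Hann window of width q, and d ≥ 1, N > 0. Define ψ: ℝ^d → ℝ by ψ(x) = ((2πN)² + Σ_{s=1}^d ∂²/∂x_s²) ∏_{ℓ=1}^d (φ*φ)(x_ℓ). Then ψ has its global maximum at 0 if Nq ≥ √d, i.e., ψ(x) ≤ ψ(0) for all x ∈ ℝ^d. -/

import Mathlib

open MeasureTheory Real

/-- The Hann window of width `q`. -/
noncomputable def hann (q x : ℝ) : ℝ := if |x| < q / 2 then Real.cos (Real.pi * x / q) ^ 2 else 0

/-- Autoconvolution of the Hann window over `ℝ`. -/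
noncomputable def hconv (q x : ℝ) : ℝ := ∫ y : ℝ, hann q y * hann q (x - y)

/-- The multivariate localising function
`ψ = ((2πN)² + Σ_s ∂²/∂x_s²) ⨂_ℓ (φ*φ)`, written via its explicit representation. -/
noncomputable def psiD (q N : ℝ) (d : ℕ) (x : Fin d → ℝ) : ℝ :=
  ((2 * π * N) ^ 2 - 4 * d * π ^ 2 / q ^ 2) * ∏ i, hconv q (x i)
    + (π ^ 2 / q ^ 2) *
      ∑ s, (q / (2 * π) * Real.sin (2 * π * |x s| / q) + q - |x s|) *
        ∏ i ∈ Finset.univ.erase s, hconv q (x i)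

/-!
Both pieces of `ψ` are nondecreasing in each factor once their coefficients are nonnegative, and
`(2πN)² − 4dπ²/q² ≥ 0` follows from `Nq ≥ √d`. The factor `φ*φ` is nonnegative and maximal at `0`,
since `φ(y)φ(x−y) ≤ (φ(y)² + φ(x−y)²)/2` and `φ` is even, so `(φ*φ)(0) = ∫ φ²`. The other factor
`(q/2π) sin(2π|t|/q) + q − |t|` is at most its value `q` at `0` because `|sin u| ≤ |u|`.
-/

lemma hann_nonneg (q x : ℝ) : 0 ≤ hann q x := by
  unfold hann; split <;> positivity

lemma hann_neg (q x : ℝ) : hann q (-x) = hann q x := by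
  simp only [hann, abs_neg, mul_neg, neg_div, Real.cos_neg]

lemma integrable_hann_sq (q : ℝ) : Integrable fun x => hann q x ^ 2 := by
  have : (fun x => hann q x ^ 2) =
      (Set.Ioo (-(q / 2)) (q / 2)).indicator fun x => Real.cos (π * x / q) ^ 4 := by
    ext x
    by_cases hx : |x| < q / 2 <;> simp [hann, Set.indicator, ← abs_lt, hx, ← pow_mul]
  rw [this, integrable_indicator_iff measurableSet_Ioo]
  exact (Continuous.integrableOn_Icc (by fun_prop)).mono_set Set.Ioo_subset_Icc_self

lemma integral_mul_sub_le_integral_sq {G : Type*} [MeasurableSpace G] [AddCommGroup G]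
    [MeasurableAdd G] [MeasurableNeg G] (μ : Measure G) [μ.IsAddLeftInvariant] [μ.IsNegInvariant]
    {f : G → ℝ} (hf : Integrable (fun y => f y ^ 2) μ) (x : G) :
    ∫ y, f y * f (x - y) ∂μ ≤ ∫ y, f y ^ 2 ∂μ := by
  by_cases hfx : Integrable (fun y => f y * f (x - y)) μ
  swap
  · rw [integral_undef hfx]
    exact integral_nonneg fun y => sq_nonneg _
  have hf' : Integrable (fun y => f (x - y) ^ 2) μ := hf.comp_sub_left x
  calc ∫ y, f y * f (x - y) ∂μ ≤ ∫ y, (f y ^ 2 + f (x - y) ^ 2) / 2 ∂μ :=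
        integral_mono hfx ((hf.add hf').div_const 2) fun y =>
          by nlinarith [sq_nonneg (f y - f (x - y))]
    _ = ∫ y, f y ^ 2 ∂μ := by
        rw [integral_div, integral_add hf hf', integral_sub_left_eq_self (fun y => f y ^ 2) μ x]
        ring

lemma hconv_nonneg (q x : ℝ) : 0 ≤ hconv q x :=
  integral_nonneg fun y => mul_nonneg (hann_nonneg q y) (hann_nonneg q _)

lemma hconv_le_hconv_zero (q x : ℝ) : hconv q x ≤ hconv q 0 := by
  have hconv_zero : hconv q 0 = ∫ y, hann q y ^ 2 := by
    simp only [hconv, zero_sub, hann_neg, sq]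
  rw [hconv_zero]
  exact integral_mul_sub_le_integral_sq volume (integrable_hann_sq q) x

lemma mul_sin_div_add_sub_abs_le (q t : ℝ) :
    q / (2 * π) * Real.sin (2 * π * |t| / q) + q - |t| ≤ q := by
  have hsin_term : q / (2 * π) * Real.sin (2 * π * |t| / q) ≤ |t| :=
    calc q / (2 * π) * Real.sin (2 * π * |t| / q)
        ≤ |q / (2 * π)| * |Real.sin (2 * π * |t| / q)| := (le_abs_self _).trans_eq (abs_mul _ _)
      _ ≤ |q / (2 * π)| * |2 * π * |t| / q| :=
          mul_le_mul_of_nonneg_left Real.abs_sin_le_abs (abs_nonneg _)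
      _ ≤ |t| := by
          rcases eq_or_ne q 0 with rfl | hq
          · simp
          · rw [← abs_mul, show q / (2 * π) * (2 * π * |t| / q) = |t| by field_simp, abs_abs]
  linarith

lemma mul_prod_add_mul_sum_mul_prod_erase_le {α ι : Type*} [Fintype ι] [DecidableEq ι]
    {f g : α → ℝ} {x₀ : α} (hf_nonneg : ∀ t, 0 ≤ f t) (hf : ∀ t, f t ≤ f x₀)
    (hg : ∀ t, g t ≤ g x₀) (hg₀ : 0 ≤ g x₀) {A B : ℝ} (hA : 0 ≤ A) (hB : 0 ≤ B) (x : ι → α) :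
    A * ∏ i, f (x i) + B * ∑ s, g (x s) * ∏ i ∈ Finset.univ.erase s, f (x i) ≤
      A * ∏ _i : ι, f x₀ + B * ∑ _s : ι, g x₀ * ∏ _i ∈ Finset.univ.erase _s, f x₀ := by
  have hprod (s : Finset ι) : ∏ i ∈ s, f (x i) ≤ ∏ _i ∈ s, f x₀ :=
    Finset.prod_le_prod (fun i _ => hf_nonneg _) fun i _ => hf _
  exact add_le_add (mul_le_mul_of_nonneg_left (hprod _) hA) <| mul_le_mul_of_nonneg_left
    (Finset.sum_le_sum fun s _ =>
      mul_le_mul (hg _) (hprod _) (Finset.prod_nonneg fun i _ => hf_nonneg _) hg₀) hB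

theorem psiD_max_at_zero_general (q N : ℝ) (d : ℕ) (hq : 0 < q)
    (h : Real.sqrt d ≤ N * q) :
    ∀ x : Fin d → ℝ, psiD q N d x ≤ psiD q N d 0 := by
  intro x
  have hA : 0 ≤ (2 * π * N) ^ 2 - 4 * d * π ^ 2 / q ^ 2 := by
    have hd_le : (d : ℝ) ≤ (N * q) ^ 2 := (Real.sqrt_le_iff.mp h).2
    rw [sub_nonneg]
    exact div_le_of_le_mul₀ (by positivity) (by positivity) (by nlinarith [Real.pi_pos])
  exact mul_prod_add_mul_sum_mul_prod_erase_le
    (g := fun t => q / (2 * π) * Real.sin (2 * π * |t| / q) + q - |t|) (hconv_nonneg q)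
    (hconv_le_hconv_zero q) (fun t => by simpa using mul_sin_div_add_sub_abs_le q t)
    (by simpa using hq.le) hA (by positivity) x

theorem psiD_max_at_zero (q N : ℝ) (d : ℕ) (hq : 0 < q) (hN : 0 < N) (hd : 1 ≤ d)
    (h : Real.sqrt d ≤ N * q) :
    ∀ x : Fin d → ℝ, psiD q N d x ≤ psiD q N d 0 :=
  psiD_max_at_zero_general q N d hq h
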